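/- arXiv:1109.1385 — 2 statements merged into one kernel-verified Lean document; each statement's English description precedes it below -/
import Mathlib

section
/- (Multiplicativity of c_n) For all positive integers m and n with gcd(m,n) = 1 one has c_{mn} = c_m · c_n. -/
/-!
The divisor sum in `c n` is the Dirichlet convolution of `|a|²` with the function that takes
the value `d ^ (2κ - 2)` at `d²` and vanishes off the squares. Both factors are multiplicative
(the second because a coprime product is a square only when both factors are), hence so is the
convolution, and the prefactor `n ^ (1 - κ)` is completely multiplicative.
-/

open ArithmeticFunction

theorem Nat.Coprime.isSquare_mul_iff {m n : ℕ} (h : m.Coprime n) :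
    IsSquare (m * n) ↔ IsSquare m ∧ IsSquare n := by
  refine ⟨fun ⟨r, hr⟩ => ?_, fun ⟨hm, hn⟩ => hm.mul hn⟩
  obtain ⟨d, rfl⟩ := exists_eq_pow_of_mul_eq_pow (Nat.isUnit_iff.mpr h) (hr.trans (sq r).symm)
  obtain ⟨e, rfl⟩ := exists_eq_pow_of_mul_eq_pow (Nat.isUnit_iff.mpr h.symm)
    ((mul_comm _ _).trans hr |>.trans (sq r).symm)
  exact ⟨.sq d, .sq e⟩

theorem isMultiplicative_toArithmeticFunction {R : Type*} [MonoidWithZero R] {f : ℕ → R}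
    (h1 : f 1 = 1) (hmul : ∀ {m n}, m ≠ 0 → n ≠ 0 → m.Coprime n → f (m * n) = f m * f n) :
    (toArithmeticFunction f).IsMultiplicative :=
  IsMultiplicative.iff_ne_zero.mpr
    ⟨by simp [toArithmeticFunction, h1],
      fun hm hn hmn => by simp [toArithmeticFunction, hm, hn, hmul hm hn hmn]⟩

namespace ArithmeticFunction

variable {R : Type*}

def onSquares [Zero R] (f : ArithmeticFunction R) : ArithmeticFunction R :=
  ⟨fun n => if IsSquare n then f n.sqrt else 0, by simp⟩

theorem onSquares_apply_sq [Zero R] (f : ArithmeticFunction R) (d : ℕ) :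
    onSquares f (d ^ 2) = f d := by
  simp [onSquares, Nat.sqrt_eq', IsSquare.sq]

theorem onSquares_apply_of_not_isSquare [Zero R] (f : ArithmeticFunction R) {n : ℕ}
    (hn : ¬IsSquare n) : onSquares f n = 0 := by
  simp [onSquares, hn]

theorem IsMultiplicative.onSquares [MonoidWithZero R] {f : ArithmeticFunction R}
    (hf : f.IsMultiplicative) : f.onSquares.IsMultiplicative := by
  refine ⟨by simpa [hf.map_one] using onSquares_apply_sq f 1, fun {m n} hmn => ?_⟩
  by_cases hsq : IsSquare m ∧ IsSquare n
  · obtain ⟨⟨u, rfl⟩, ⟨v, rfl⟩⟩ := And.imp (IsSquare.exists_sq _) (IsSquare.exists_sq _) hsq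
    have huv : u.Coprime v := Nat.coprime_pow_left_iff two_pos _ _ |>.mp
      (Nat.coprime_pow_right_iff two_pos _ _ |>.mp hmn)
    rw [← mul_pow, onSquares_apply_sq, onSquares_apply_sq, onSquares_apply_sq,
      hf.map_mul_of_coprime huv]
  · rw [onSquares_apply_of_not_isSquare f (mt hmn.isSquare_mul_iff.mp hsq)]
    rcases not_and_or.mp hsq with h | h <;> simp [onSquares_apply_of_not_isSquare f h]

theorem onSquares_toArithmeticFunction_mul_apply [Semiring R] (f g : ℕ → R) (n : ℕ) :
    (onSquares (toArithmeticFunction f) * toArithmeticFunction g) n =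
      ∑ d ∈ n.divisors with d ^ 2 ∣ n, f d * g (n / d ^ 2) := by
  rw [mul_apply, Nat.sum_divisorsAntidiagonal
    (fun x y => onSquares (toArithmeticFunction f) x * toArithmeticFunction g y)]
  symm
  calc ∑ d ∈ n.divisors with d ^ 2 ∣ n, f d * g (n / d ^ 2)
      = ∑ d ∈ n.divisors with d ^ 2 ∣ n,
          onSquares (toArithmeticFunction f) (d ^ 2) * toArithmeticFunction g (n / d ^ 2) := by
        refine Finset.sum_congr rfl fun d hd => ?_
        simp only [Finset.mem_filter, Nat.mem_divisors] at hd
        have hd0 : d ≠ 0 := by rintro rfl; simp_all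
        have hq0 : n / d ^ 2 ≠ 0 := by
          simp [Nat.div_eq_zero_iff, hd0, Nat.le_of_dvd (Nat.pos_of_ne_zero hd.1.2) hd.2]
        rw [onSquares_apply_sq]
        simp [toArithmeticFunction, hd0, hq0]
    _ = ∑ e ∈ (n.divisors.filter (· ^ 2 ∣ n)).image (· ^ 2),
          onSquares (toArithmeticFunction f) e * toArithmeticFunction g (n / e) := by
        rw [Finset.sum_image fun x _ y _ h => Nat.pow_left_injective two_ne_zero h]
    _ = _ := by
        refine Finset.sum_subset (fun e he => ?_) fun e he hne => ?_
        · obtain ⟨d, hd, rfl⟩ := Finset.mem_image.mp he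
          simp only [Finset.mem_filter, Nat.mem_divisors] at hd ⊢
          exact ⟨hd.2, hd.1.2⟩
        · rw [onSquares_apply_of_not_isSquare _ fun hsq => hne ?_, zero_mul]
          obtain ⟨d, rfl⟩ := hsq.exists_sq _
          have hd := Nat.mem_divisors.mp he
          exact Finset.mem_image.mpr ⟨d, Finset.mem_filter.mpr
            ⟨Nat.mem_divisors.mpr ⟨(dvd_pow_self d two_ne_zero).trans hd.1, hd.2⟩, hd.1⟩, rfl⟩

end ArithmeticFunction

theorem stmt_12_general
    (κ : ℕ)
    (a : ℕ → ℂ)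
    (ha1 : a 1 = 1)
    (hmult : ∀ m n : ℕ, Nat.Coprime m n → a (m * n) = a m * a n)
    (c : ℕ → ℝ)
    (hc : ∀ n : ℕ, 1 ≤ n → c n = (n : ℝ) ^ ((1 : ℤ) - (κ : ℤ)) *
      ∑ m ∈ n.divisors.filter (fun m => m ^ 2 ∣ n),
        (m : ℝ) ^ (2 * (κ - 1)) * ‖a (n / m ^ 2)‖ ^ 2)
    (m n : ℕ) (hm : 1 ≤ m) (hn : 1 ≤ n) (hmn : Nat.Coprime m n) :
    c (m * n) = c m * c n := by
  have hweight : (toArithmeticFunction fun d : ℕ => (d : ℝ) ^ (2 * (κ - 1))).IsMultiplicative :=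
    isMultiplicative_toArithmeticFunction (by simp) fun _ _ _ => by push_cast; exact mul_pow ..
  have hnormSq : (toArithmeticFunction fun n => ‖a n‖ ^ 2).IsMultiplicative :=
    isMultiplicative_toArithmeticFunction (by simp [ha1]) fun _ _ h => by
      rw [hmult _ _ h, norm_mul, mul_pow]
  have hsum (k : ℕ) := onSquares_toArithmeticFunction_mul_apply
    (fun d : ℕ => (d : ℝ) ^ (2 * (κ - 1))) (fun n => ‖a n‖ ^ 2) k
  rw [hc _ (Nat.one_le_iff_ne_zero.mpr (by positivity)), hc m hm, hc n hn,
    ← hsum, ← hsum, ← hsum, (hweight.onSquares.mul hnormSq).map_mul_of_coprime hmn,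
    Nat.cast_mul, mul_zpow]
  ring

theorem stmt_12
    (κ : ℕ) (hκeven : Even κ) (hκ12 : 12 ≤ κ)
    (f : CuspForm (Matrix.SpecialLinearGroup.mapGL ℝ : Matrix.SpecialLinearGroup (Fin 2) ℤ →* GL (Fin 2) ℝ).range (κ : ℤ)) (hf : f ≠ 0)
    (a : ℕ → ℂ)
    (hfour : ∀ z : UpperHalfPlane, f z =
      ∑' n : ℕ, a (n + 1) * Complex.exp (2 * Real.pi * Complex.I * ((n : ℂ) + 1) * (z : ℂ)))
    (ha1 : a 1 = 1)
    (hmult : ∀ m n : ℕ, Nat.Coprime m n → a (m * n) = a m * a n)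
    (hhecke : ∀ p : ℕ, p.Prime → ∀ j : ℕ, 1 ≤ j →
      a (p ^ (j + 1)) = a p * a (p ^ j) - (p : ℂ) ^ (κ - 1) * a (p ^ (j - 1)))
    (c : ℕ → ℝ)
    (hc : ∀ n : ℕ, 1 ≤ n → c n = (n : ℝ) ^ ((1 : ℤ) - (κ : ℤ)) *
      ∑ m ∈ n.divisors.filter (fun m => m ^ 2 ∣ n),
        (m : ℝ) ^ (2 * (κ - 1)) * ‖a (n / m ^ 2)‖ ^ 2)
    (m n : ℕ) (hm : 1 ≤ m) (hn : 1 ≤ n) (hmn : Nat.Coprime m n) :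
    c (m * n) = c m * c n :=
  stmt_12_general κ a ha1 hmult c hc m n hm hn hmn
end

section
/- (Asymptotics for Σ|a(n)|²) There exists a constant D > 0 such that Σ_{n≤x} |a(n)|² = D·x^κ + O(x^{κ−2/5}) as x → ∞. -/
/-!
Write `b n = ‖a n‖ ^ 2` and `κ = r + 1`. The definition of `c` says `k ^ r * c k` is the sum of
`m ^ (2 * r) * b j` over `m ^ 2 * j = k`, so `T M = ∑_{k ≤ M} k ^ r * c k` is
`∑_{m ≤ √M} m ^ (2 * r) * B (M / m ^ 2)` with `B N = ∑_{n ≤ N} b n`, and Möbius inversion over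
square divisors gives `B N = ∑_{d ≤ √N} μ d * d ^ (2 * r) * T (N / d ^ 2)`.
Partial summation turns `∑_{n ≤ x} c n = C x + O(x ^ (3/5))` into
`T ⌊y⌋ = C y ^ κ / κ + O(y ^ (κ - 2/5))`. Substituting `y = x / d ^ 2`, the error terms add up to
`O(x ^ (κ - 2/5) ∑ d ^ (-6/5))`, and completing `∑_{d ≤ √x} μ d / d ^ 2` to the full series costs
`O(x ^ (κ - 1/2))`. Hence `D = C / κ * ∑ μ d / d ^ 2`, which is positive.
-/

open Complex Real MeasureTheory Asymptotics Filter Finset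
open ArithmeticFunction
open scoped ArithmeticFunction.Moebius

theorem sum_Icc_sum_sq_dvd {M : Type*} [AddCommMonoid M] (F : ℕ → ℕ → M) (N : ℕ) :
    ∑ k ∈ Icc 1 N, ∑ m ∈ k.divisors with m ^ 2 ∣ k, F m (k / m ^ 2)
      = ∑ m ∈ Icc 1 N.sqrt, ∑ j ∈ Icc 1 (N / m ^ 2), F m j := by
  rw [sum_sigma', sum_sigma']
  refine sum_nbij' (fun p => ⟨p.2, p.1 / p.2 ^ 2⟩) (fun p => ⟨p.1 ^ 2 * p.2, p.1⟩)
    ?_ ?_ ?_ ?_ fun _ _ => rfl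
  · rintro ⟨k, m⟩ hkm
    simp only [mem_sigma, mem_Icc, mem_filter, Nat.mem_divisors] at hkm ⊢
    obtain ⟨⟨hk1, hkN⟩, ⟨hmk, -⟩, hm2k⟩ := hkm
    have hm2 : m ^ 2 ≤ k := Nat.le_of_dvd (by omega) hm2k
    have hm0 : 0 < m ^ 2 := Nat.pos_of_dvd_of_pos hm2k (by omega)
    refine ⟨⟨Nat.pos_of_ne_zero (by rintro rfl; simp at hm0),
      Nat.le_sqrt'.mpr (hm2.trans hkN)⟩, (Nat.one_le_div_iff hm0).mpr hm2,
      Nat.div_le_div_right hkN⟩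
  · rintro ⟨m, j⟩ hmj
    simp only [mem_sigma, mem_Icc, mem_filter, Nat.mem_divisors] at hmj ⊢
    obtain ⟨⟨hm1, -⟩, hj1, hjN⟩ := hmj
    have hm0 : 0 < m ^ 2 := by positivity
    refine ⟨⟨Nat.mul_pos hm0 hj1, by
      rw [mul_comm]; exact (Nat.le_div_iff_mul_le hm0).mp hjN⟩,
      ⟨Dvd.intro (m * j) (by ring), by positivity⟩, Dvd.intro j rfl⟩
  · rintro ⟨k, m⟩ hkm
    simp only [mem_sigma, mem_filter] at hkm
    simp [Nat.mul_div_cancel' hkm.2.2]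
  · rintro ⟨m, j⟩ hmj
    simp only [mem_sigma, mem_Icc] at hmj
    have hm0 : 0 < m ^ 2 := pow_pos hmj.1.1 2
    simp [Nat.mul_div_cancel_left j hm0]

theorem sum_Icc_sqrt_sum_Icc_sqrt_div {M : Type*} [AddCommMonoid M] (G : ℕ → ℕ → M) (N : ℕ) :
    ∑ d ∈ Icc 1 N.sqrt, ∑ m ∈ Icc 1 (N / d ^ 2).sqrt, G d m
      = ∑ s ∈ Icc 1 N.sqrt, ∑ d ∈ s.divisors, G d (s / d) := by
  rw [sum_sigma', sum_sigma']
  refine sum_nbij' (fun p => ⟨p.1 * p.2, p.1⟩) (fun p => ⟨p.2, p.1 / p.2⟩) ?_ ?_ ?_ ?_ ?_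
  · rintro ⟨d, m⟩ hdm
    simp only [mem_sigma, mem_Icc, Nat.mem_divisors] at hdm ⊢
    obtain ⟨⟨hd1, -⟩, hm1, hmN⟩ := hdm
    have hdm : (d * m) ^ 2 ≤ N := by
      rw [Nat.le_sqrt', Nat.le_div_iff_mul_le (by positivity)] at hmN
      linarith [mul_pow d m 2]
    exact ⟨⟨Nat.mul_pos hd1 hm1, Nat.le_sqrt'.mpr hdm⟩, dvd_mul_right d m, by positivity⟩
  · rintro ⟨s, d⟩ hsd
    simp only [mem_sigma, mem_Icc, Nat.mem_divisors] at hsd ⊢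
    obtain ⟨⟨hs1, hsN⟩, hds, -⟩ := hsd
    obtain ⟨m, rfl⟩ := hds
    have hd1 : 0 < d := Nat.pos_of_mul_pos_right hs1
    have hm1 : 0 < m := Nat.pos_of_mul_pos_left hs1
    rw [Nat.mul_div_cancel_left m hd1]
    refine ⟨⟨hd1, le_trans (Nat.le_mul_of_pos_right d hm1) hsN⟩, hm1, ?_⟩
    rw [Nat.le_sqrt', Nat.le_div_iff_mul_le (by positivity), ← mul_pow, mul_comm m]
    exact Nat.le_sqrt'.mp hsN
  · rintro ⟨d, m⟩ hdm
    simp only [mem_sigma, mem_Icc] at hdm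
    simp [Nat.mul_div_cancel_left m hdm.1.1]
  · rintro ⟨s, d⟩ hsd
    simp only [mem_sigma, Nat.mem_divisors] at hsd
    simp [Nat.mul_div_cancel' hsd.2.1]
  · rintro ⟨d, m⟩ hdm
    simp only [mem_sigma, mem_Icc] at hdm
    simp [Nat.mul_div_cancel_left m hdm.1.1]

theorem sum_divisors_moebius {R : Type*} [Ring R] (n : ℕ) :
    ∑ d ∈ n.divisors, (μ d : R) = if n = 1 then 1 else 0 := by
  have h := congrArg (fun f : ArithmeticFunction R => f n) coe_moebius_mul_coe_zeta
  simp only [coe_mul_zeta_apply, one_apply, intCoe_apply] at h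
  exact h

theorem sum_moebius_mul_sum_sqrt_div {R : Type*} [CommRing R] (w B T : ℕ → R)
    (hw_one : w 1 = 1) (hw_mul : ∀ d m, w (d * m) = w d * w m)
    (hT : ∀ M, T M = ∑ m ∈ Icc 1 M.sqrt, w m * B (M / m ^ 2)) {N : ℕ} (hN : 1 ≤ N) :
    ∑ d ∈ Icc 1 N.sqrt, (μ d : R) * w d * T (N / d ^ 2) = B N := by
  have h1 : 1 ∈ Icc 1 N.sqrt := mem_Icc.mpr ⟨le_rfl, Nat.le_sqrt'.mpr (by simpa using hN)⟩
  calc ∑ d ∈ Icc 1 N.sqrt, (μ d : R) * w d * T (N / d ^ 2)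
      = ∑ d ∈ Icc 1 N.sqrt, ∑ m ∈ Icc 1 (N / d ^ 2).sqrt,
          (μ d : R) * (w d * w m) * B (N / d ^ 2 / m ^ 2) := by
        simp only [hT, mul_sum, mul_assoc]
    _ = ∑ s ∈ Icc 1 N.sqrt, ∑ d ∈ s.divisors, (μ d : R) * (w s * B (N / s ^ 2)) := by
        rw [sum_Icc_sqrt_sum_Icc_sqrt_div]
        refine sum_congr rfl fun s _ => sum_congr rfl fun d hd => ?_
        obtain ⟨m, rfl⟩ := (Nat.mem_divisors.mp hd).1
        have hd0 : 0 < d := Nat.pos_of_ne_zero (by rintro rfl; simp at hd)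
        rw [Nat.mul_div_cancel_left m hd0, hw_mul, Nat.div_div_eq_div_mul, ← mul_pow, mul_assoc]
    _ = B N := by
        simp only [← sum_mul, sum_divisors_moebius, ite_mul, one_mul, zero_mul,
          sum_ite_eq', if_pos h1, hw_one, Nat.pow_two, Nat.div_one, one_mul]

theorem sum_Icc_eq_sum_moebius_mul_sum_pow_mul {b c : ℕ → ℝ} (r : ℕ)
    (hbc : ∀ k : ℕ, 1 ≤ k →
      (k : ℝ) ^ r * c k = ∑ m ∈ k.divisors with m ^ 2 ∣ k, (m : ℝ) ^ (2 * r) * b (k / m ^ 2))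
    {N : ℕ} (hN : 1 ≤ N) :
    ∑ n ∈ Icc 1 N, b n = ∑ d ∈ Icc 1 N.sqrt,
      (μ d : ℝ) * (d : ℝ) ^ (2 * r) * ∑ k ∈ Icc 1 (N / d ^ 2), (k : ℝ) ^ r * c k := by
  refine (sum_moebius_mul_sum_sqrt_div (fun m => (m : ℝ) ^ (2 * r)) (fun N => ∑ n ∈ Icc 1 N, b n)
    (fun M => ∑ k ∈ Icc 1 M, (k : ℝ) ^ r * c k) (by simp) (fun d m => by push_cast; ring)
    (fun M => ?_) hN).symm
  simp only [mul_sum]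
  rw [← sum_Icc_sum_sq_dvd]
  exact sum_congr rfl fun k hk => hbc k (mem_Icc.mp hk).1

theorem sum_Icc_one_eq_sum_range {M : Type*} [AddCommMonoid M] (f : ℕ → M) (n : ℕ) :
    ∑ k ∈ Icc 1 n, f k = ∑ k ∈ range n, f (k + 1) := by
  rw [← Ico_add_one_right_eq_Icc, sum_Ico_eq_sum_range]
  simp [add_comm]

theorem abs_sum_Icc_pow_sub_le (r M : ℕ) :
    |∑ k ∈ Icc 1 M, (k : ℝ) ^ r - (M : ℝ) ^ (r + 1) / (r + 1)| ≤ (M : ℝ) ^ r := by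
  have hmono : MonotoneOn (fun x : ℝ => x ^ r) (Set.Icc 0 (0 + M)) :=
    fun x hx _ _ hxy => pow_le_pow_left₀ hx.1 hxy r
  have hint : ∫ x in (0 : ℝ)..M, x ^ r = (M : ℝ) ^ (r + 1) / (r + 1) := by
    simp [integral_pow]
  have hlow := hmono.sum_le_integral
  have hup := hmono.integral_le_sum
  simp only [zero_add, Nat.cast_add, Nat.cast_one] at hlow hup
  rw [hint] at hlow hup
  have hshift : ∑ k ∈ range M, ((k : ℝ) + 1) ^ r + 0 ^ r
      = ∑ k ∈ range M, (k : ℝ) ^ r + (M : ℝ) ^ r := by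
    have := (sum_range_succ' (fun k : ℕ => (k : ℝ) ^ r) M).symm.trans (sum_range_succ _ M)
    push_cast at this
    exact this
  rw [sum_Icc_one_eq_sum_range, abs_le]
  push_cast
  constructor <;>
    nlinarith [pow_nonneg (le_refl (0 : ℝ)) r, pow_nonneg (Nat.cast_nonneg (α := ℝ) M) r]

theorem exists_abs_le_rpow_of_isBigO {f : ℝ → ℝ} {θ : ℝ} (hf : f =O[atTop] fun x => x ^ θ) :
    ∃ A, 0 < A ∧ ∀ n : ℕ, 1 ≤ n → |f n| ≤ A * (n : ℝ) ^ θ := by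
  obtain ⟨A, hA, h⟩ := bound_of_isBigO_nat_atTop (hf.comp_tendsto tendsto_natCast_atTop_atTop)
  refine ⟨A, hA, fun n hn => ?_⟩
  have hpos : 0 < (n : ℝ) ^ θ := rpow_pos_of_pos (by exact_mod_cast hn) θ
  simpa [abs_of_pos hpos] using h hpos.ne'

theorem abs_sum_Icc_mul_sub_le {c g : ℕ → ℝ} {C A θ : ℝ} (hθ : 0 ≤ θ) (hA : 0 ≤ A)
    (hg : Monotone g) (hg0 : 0 ≤ g 0)
    (hc : ∀ n, 1 ≤ n → |∑ k ∈ Icc 1 n, c k - C * n| ≤ A * (n : ℝ) ^ θ) (M : ℕ) :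
    |∑ k ∈ Icc 1 M, g k * c k - C * ∑ k ∈ Icc 1 M, g k| ≤ 2 * A * g M * (M : ℝ) ^ θ := by
  set E : ℕ → ℝ := fun n => ∑ k ∈ Icc 1 n, c k - C * n
  have hE : ∀ n ≤ M, |E n| ≤ A * (M : ℝ) ^ θ := by
    intro n hn
    rcases Nat.eq_zero_or_pos n with rfl | hn1
    · simp only [E, Icc_eq_empty_of_lt zero_lt_one, sum_empty, CharP.cast_eq_zero, mul_zero,
        sub_zero, abs_zero]
      positivity
    · exact (hc n hn1).trans (by gcongr)
  have abel : ∀ N, ∑ k ∈ Icc 1 N, g k * c k - C * ∑ k ∈ Icc 1 N, g k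
      = g N * E N - ∑ k ∈ range N, (g (k + 1) - g k) * E k := by
    intro N
    induction N with
    | zero => simp [E]
    | succ N ih =>
      have hE1 : E (N + 1) = E N + c (N + 1) - C := by
        simp only [E, sum_Icc_succ_top (Nat.le_add_left 1 N)]
        push_cast; ring
      rw [sum_Icc_succ_top (Nat.le_add_left 1 N), sum_Icc_succ_top (Nat.le_add_left 1 N),
        sum_range_succ, hE1]
      linear_combination ih
  have hgM : 0 ≤ g M := hg0.trans (hg (Nat.zero_le M))
  calc |∑ k ∈ Icc 1 M, g k * c k - C * ∑ k ∈ Icc 1 M, g k|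
      ≤ |g M * E M| + |∑ k ∈ range M, (g (k + 1) - g k) * E k| := by
        rw [abel]; exact abs_sub _ _
    _ ≤ g M * (A * (M : ℝ) ^ θ) + ∑ k ∈ range M, (g (k + 1) - g k) * (A * (M : ℝ) ^ θ) := by
        gcongr
        · rw [abs_mul, abs_of_nonneg hgM]
          exact mul_le_mul_of_nonneg_left (hE M le_rfl) hgM
        · refine (abs_sum_le_sum_abs _ _).trans (sum_le_sum fun k hk => ?_)
          have hgk : 0 ≤ g (k + 1) - g k := sub_nonneg.mpr (hg k.le_succ)
          rw [abs_mul, abs_of_nonneg hgk]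
          exact mul_le_mul_of_nonneg_left (hE k (mem_range.mp hk).le) hgk
    _ ≤ 2 * A * g M * (M : ℝ) ^ θ := by
        rw [← sum_mul, sum_range_sub g M]
        nlinarith [mul_nonneg hA (rpow_nonneg (Nat.cast_nonneg M) θ)]

theorem abs_moebius_div_sq_le (d : ℕ) : |(μ d : ℝ) / (d : ℝ) ^ 2| ≤ ((d : ℝ) ^ 2)⁻¹ := by
  have hμ : |(μ d : ℝ)| ≤ 1 := by exact_mod_cast abs_moebius_le_one
  rw [abs_div, abs_of_nonneg (by positivity : (0 : ℝ) ≤ (d : ℝ) ^ 2), div_eq_mul_inv]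
  exact mul_le_of_le_one_left (by positivity) hμ

theorem abs_sum_Icc_moebius_div_sq_sub_tsum_le (R : ℕ) :
    |∑ d ∈ Icc 1 R, (μ d : ℝ) / (d : ℝ) ^ 2 - ∑' d : ℕ, (μ d : ℝ) / (d : ℝ) ^ 2|
      ≤ 2 / (R + 1) := by
  set f : ℕ → ℝ := fun d => (μ d : ℝ) / (d : ℝ) ^ 2
  have hf : Summable f := .of_norm_bounded (summable_nat_pow_inv.mpr one_lt_two)
    fun d => abs_moebius_div_sq_le d
  have htail : ∀ n, R + 1 ≤ n → |∑ d ∈ range n, f d - ∑ d ∈ Icc 1 R, f d| ≤ 2 / (R + 1) := by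
    intro n hn
    have hf0 : f 0 = 0 := by simp [f]
    rw [← sum_range_add_sum_Ico f hn, sum_range_succ', ← sum_Icc_one_eq_sum_range,
      Ico_add_one_left_eq_Ioo, hf0, add_zero, add_sub_cancel_left]
    calc |∑ d ∈ Ioo R n, (μ d : ℝ) / (d : ℝ) ^ 2| ≤ ∑ d ∈ Ioo R n, ((d : ℝ) ^ 2)⁻¹ :=
          (abs_sum_le_sum_abs _ _).trans (sum_le_sum fun d _ => abs_moebius_div_sq_le d)
      _ ≤ 2 / (R + 1) := sum_Ioo_inv_sq_le R n
  rw [abs_sub_comm]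
  exact le_of_tendsto ((hf.hasSum.tendsto_sum_nat.sub_const _).abs)
    (eventually_atTop.mpr ⟨R + 1, htail⟩)

theorem tsum_moebius_div_sq_pos : 0 < ∑' d : ℕ, (μ d : ℝ) / (d : ℝ) ^ 2 := by
  have h := abs_le.mp (abs_sum_Icc_moebius_div_sq_sub_tsum_le 2)
  have h2 : ∑ d ∈ Icc 1 2, (μ d : ℝ) / (d : ℝ) ^ 2 = 3 / 4 := by
    norm_num [sum_Icc_succ_top, moebius_apply_prime Nat.prime_two]
  rw [h2] at h
  norm_num at h
  linarith [h.2]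

theorem abs_sum_Icc_floor_pow_mul_sub_le {c : ℕ → ℝ} {C A θ : ℝ} (r : ℕ) (hθ : 0 ≤ θ)
    (hA : 0 ≤ A) (hC : 0 ≤ C)
    (hc : ∀ n, 1 ≤ n → |∑ k ∈ Icc 1 n, c k - C * n| ≤ A * (n : ℝ) ^ θ) {x : ℝ} (hx : 1 ≤ x) :
    |∑ k ∈ Icc 1 ⌊x⌋₊, (k : ℝ) ^ r * c k - C / (r + 1) * x ^ (r + 1)|
      ≤ (2 * A + 2 * C) * x ^ r * x ^ θ := by
  set N := ⌊x⌋₊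
  have hx0 : 0 ≤ x := zero_le_one.trans hx
  have hNx : (N : ℝ) ≤ x := Nat.floor_le hx0
  have hxN : x - N ≤ 1 := by linarith [Nat.lt_floor_add_one x]
  have hxθ : 1 ≤ x ^ θ := one_le_rpow hx hθ
  have hNr : (N : ℝ) ^ r ≤ x ^ r := pow_le_pow_left₀ (Nat.cast_nonneg N) hNx r
  have hweights := abs_sum_Icc_mul_sub_le hθ hA
    (fun a b h => pow_le_pow_left₀ (Nat.cast_nonneg a) (Nat.cast_le.mpr h) r)
    (by positivity) hc N
  have hpowers := abs_sum_Icc_pow_sub_le r N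
  have hfloor : |(N : ℝ) ^ (r + 1) - x ^ (r + 1)| ≤ (r + 1) * x ^ r := by
    have h := abs_pow_sub_pow_le (N : ℝ) x (r + 1)
    rw [abs_sub_comm (N : ℝ) x, abs_of_nonneg (by linarith : 0 ≤ x - N),
      abs_of_nonneg (Nat.cast_nonneg (α := ℝ) N), abs_of_nonneg hx0, max_eq_right hNx,
      Nat.add_sub_cancel] at h
    push_cast at h
    refine h.trans ?_
    calc (x - N) * (r + 1) * x ^ r ≤ 1 * (r + 1) * x ^ r := by gcongr
      _ = (r + 1) * x ^ r := by ring
  have hsplit : ∑ k ∈ Icc 1 N, (k : ℝ) ^ r * c k - C / (r + 1) * x ^ (r + 1)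
      = (∑ k ∈ Icc 1 N, (k : ℝ) ^ r * c k - C * ∑ k ∈ Icc 1 N, (k : ℝ) ^ r)
        + C * (∑ k ∈ Icc 1 N, (k : ℝ) ^ r - (N : ℝ) ^ (r + 1) / (r + 1))
        + C / (r + 1) * ((N : ℝ) ^ (r + 1) - x ^ (r + 1)) := by
    field_simp; ring
  rw [hsplit]
  refine (abs_add_three _ _ _).trans ?_
  rw [abs_mul, abs_mul, abs_of_nonneg hC, abs_of_nonneg (by positivity : 0 ≤ C / (r + 1))]
  have hNθ : (N : ℝ) ^ θ ≤ x ^ θ := rpow_le_rpow (Nat.cast_nonneg N) hNx hθ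
  have hxr : 0 ≤ x ^ r := pow_nonneg hx0 r
  calc _ ≤ 2 * A * x ^ r * x ^ θ + C * x ^ r + C / (r + 1) * ((r + 1) * x ^ r) := by
        gcongr
        · exact hweights.trans (by gcongr)
        · exact hpowers.trans hNr
    _ ≤ (2 * A + 2 * C) * x ^ r * x ^ θ := by
        field_simp
        nlinarith [mul_le_mul_of_nonneg_left hxθ (mul_nonneg hC hxr)]

theorem abs_pow_mul_sub_at_div_sq_le {T : ℕ → ℝ} {C K θ : ℝ} (r : ℕ)
    (hT : ∀ y : ℝ, 1 ≤ y → |T ⌊y⌋₊ - C * y ^ (r + 1)| ≤ K * y ^ r * y ^ θ) {x : ℝ} {d : ℕ}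
    (hd : 1 ≤ d) (hdx : ((d ^ 2 : ℕ) : ℝ) ≤ x) :
    |(d : ℝ) ^ (2 * r) * (T (⌊x⌋₊ / d ^ 2) - C * (x / (d : ℝ) ^ 2) ^ (r + 1))|
      ≤ K * x ^ r * x ^ θ * (1 / (d : ℝ) ^ (2 * θ)) := by
  have hd0 : (0 : ℝ) < d := by exact_mod_cast hd
  have hx0 : 0 ≤ x := (by positivity : (0 : ℝ) ≤ ((d ^ 2 : ℕ) : ℝ)).trans hdx
  have hy : 1 ≤ x / (d : ℝ) ^ 2 := by
    rw [le_div_iff₀ (by positivity), one_mul]; exact_mod_cast hdx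
  have hfloor : ⌊x / (d : ℝ) ^ 2⌋₊ = ⌊x⌋₊ / d ^ 2 := by
    rw [← Nat.floor_div_natCast]; push_cast; rfl
  have hrpow : (x / (d : ℝ) ^ 2) ^ θ = x ^ θ * (1 / (d : ℝ) ^ (2 * θ)) := by
    have hd2 : ((d : ℝ) ^ 2) ^ θ = (d : ℝ) ^ (2 * θ) := by
      rw [← rpow_natCast, ← rpow_mul hd0.le]; norm_num
    rw [div_rpow hx0 (by positivity), hd2]; ring
  rw [abs_mul, abs_of_nonneg (by positivity), ← hfloor]
  calc (d : ℝ) ^ (2 * r) * |T ⌊x / (d : ℝ) ^ 2⌋₊ - C * (x / (d : ℝ) ^ 2) ^ (r + 1)|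
      ≤ (d : ℝ) ^ (2 * r) * (K * (x / (d : ℝ) ^ 2) ^ r * (x / (d : ℝ) ^ 2) ^ θ) := by
        gcongr; exact hT _ hy
    _ = K * x ^ r * x ^ θ * (1 / (d : ℝ) ^ (2 * θ)) := by
        rw [hrpow, div_pow, pow_mul]; field_simp

theorem abs_pow_succ_mul_sum_moebius_sub_tsum_le (C : ℝ) (r : ℕ) {θ : ℝ} (hθ : 1 / 2 ≤ θ)
    {x : ℝ} (hx : 1 ≤ x) :
    |C * x ^ (r + 1) * (∑ d ∈ Icc 1 ⌊x⌋₊.sqrt, (μ d : ℝ) / (d : ℝ) ^ 2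
        - ∑' d : ℕ, (μ d : ℝ) / (d : ℝ) ^ 2)| ≤ 2 * |C| * x ^ r * x ^ θ := by
  set N := ⌊x⌋₊
  set R := N.sqrt
  have hx0 : 0 ≤ x := zero_le_one.trans hx
  have hsqrt : √x ≤ R + 1 := by
    have hNR : N + 1 ≤ (R + 1) ^ 2 := Nat.lt_succ_sqrt' N
    rw [sqrt_le_left (by positivity)]
    calc x ≤ N + 1 := (Nat.lt_floor_add_one x).le
      _ ≤ (R + 1) ^ 2 := by exact_mod_cast hNR
  have hsqrtθ : √x ≤ x ^ θ := by
    rw [sqrt_eq_rpow]; exact rpow_le_rpow_of_exponent_le hx hθ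
  have hx_le : x ≤ (R + 1) * x ^ θ := by
    calc x = √x * √x := (mul_self_sqrt hx0).symm
      _ ≤ (R + 1) * x ^ θ := mul_le_mul hsqrt hsqrtθ (sqrt_nonneg x) (by positivity)
  rw [abs_mul, abs_mul, abs_of_nonneg (by positivity : 0 ≤ x ^ (r + 1))]
  calc |C| * x ^ (r + 1) * |∑ d ∈ Icc 1 R, (μ d : ℝ) / (d : ℝ) ^ 2
          - ∑' d : ℕ, (μ d : ℝ) / (d : ℝ) ^ 2|
      ≤ |C| * x ^ (r + 1) * (2 / (R + 1)) := by
        gcongr; exact abs_sum_Icc_moebius_div_sq_sub_tsum_le R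
    _ ≤ 2 * |C| * x ^ r * x ^ θ := by
        rw [pow_succ, mul_div_assoc', div_le_iff₀ (by positivity)]
        nlinarith [mul_le_mul_of_nonneg_left hx_le (by positivity : 0 ≤ 2 * |C| * x ^ r)]

theorem abs_sum_moebius_mul_floor_div_sub_le {T : ℕ → ℝ} {C K θ : ℝ} (r : ℕ) (hθ : 1 / 2 < θ)
    (hK : 0 ≤ K) (hT : ∀ y : ℝ, 1 ≤ y → |T ⌊y⌋₊ - C * y ^ (r + 1)| ≤ K * y ^ r * y ^ θ)
    {x : ℝ} (hx : 1 ≤ x) :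
    |∑ d ∈ Icc 1 ⌊x⌋₊.sqrt, (μ d : ℝ) * (d : ℝ) ^ (2 * r) * T (⌊x⌋₊ / d ^ 2)
        - C * (∑' d : ℕ, (μ d : ℝ) / (d : ℝ) ^ 2) * x ^ (r + 1)|
      ≤ (K * ∑' d : ℕ, 1 / (d : ℝ) ^ (2 * θ) + 2 * |C|) * x ^ r * x ^ θ := by
  set N := ⌊x⌋₊
  set R := N.sqrt
  set L := ∑' d : ℕ, (μ d : ℝ) / (d : ℝ) ^ 2
  have hx0 : 0 ≤ x := zero_le_one.trans hx
  have hsplit :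
      ∑ d ∈ Icc 1 R, (μ d : ℝ) * (d : ℝ) ^ (2 * r) * T (N / d ^ 2) - C * L * x ^ (r + 1)
        = ∑ d ∈ Icc 1 R,
            (μ d : ℝ) * ((d : ℝ) ^ (2 * r) * (T (N / d ^ 2) - C * (x / (d : ℝ) ^ 2) ^ (r + 1)))
          + C * x ^ (r + 1) * (∑ d ∈ Icc 1 R, (μ d : ℝ) / (d : ℝ) ^ 2 - L) := by
    have hterm : ∀ d ∈ Icc 1 R, (μ d : ℝ) * (d : ℝ) ^ (2 * r) * T (N / d ^ 2)
        = (μ d : ℝ) * ((d : ℝ) ^ (2 * r) * (T (N / d ^ 2) - C * (x / (d : ℝ) ^ 2) ^ (r + 1)))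
          + C * x ^ (r + 1) * ((μ d : ℝ) / (d : ℝ) ^ 2) := by
      intro d hd
      have hd0 : (d : ℝ) ≠ 0 := by have := (mem_Icc.mp hd).1; positivity
      rw [div_pow, pow_mul]; field_simp; ring
    rw [sum_congr rfl hterm, sum_add_distrib, ← mul_sum]; ring
  have hmain : |∑ d ∈ Icc 1 R, (μ d : ℝ) *
      ((d : ℝ) ^ (2 * r) * (T (N / d ^ 2) - C * (x / (d : ℝ) ^ 2) ^ (r + 1)))|
      ≤ K * x ^ r * x ^ θ * ∑' d : ℕ, 1 / (d : ℝ) ^ (2 * θ) := by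
    calc _ ≤ _ := abs_sum_le_sum_abs _ _
      _ ≤ ∑ d ∈ Icc 1 R, K * x ^ r * x ^ θ * (1 / (d : ℝ) ^ (2 * θ)) := sum_le_sum fun d hd => by
        obtain ⟨hd1, hdR⟩ := mem_Icc.mp hd
        have hdx : ((d ^ 2 : ℕ) : ℝ) ≤ x :=
          (Nat.cast_le.mpr (Nat.le_sqrt'.mp hdR)).trans (Nat.floor_le hx0)
        have hμ : |(μ d : ℝ)| ≤ 1 := by exact_mod_cast abs_moebius_le_one
        rw [abs_mul]
        exact (mul_le_of_le_one_left (abs_nonneg _) hμ).trans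
          (abs_pow_mul_sub_at_div_sq_le r hT hd1 hdx)
      _ ≤ _ := by
        rw [← mul_sum]
        exact mul_le_mul_of_nonneg_left (Summable.sum_le_tsum _ (fun _ _ => by positivity)
          (summable_one_div_nat_rpow.mpr (by linarith))) (by positivity)
  have htail := abs_pow_succ_mul_sum_moebius_sub_tsum_le C r hθ.le hx
  rw [hsplit]
  calc _ ≤ _ := abs_add_le _ _
    _ ≤ _ := add_le_add hmain htail
    _ = _ := by ring

theorem stmt_13_general
    (κ : ℕ) (hκ12 : 12 ≤ κ)
    (a : ℕ → ℂ)
    (c : ℕ → ℝ)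
    (hc : ∀ n : ℕ, 1 ≤ n → c n = (n : ℝ) ^ ((1 : ℤ) - (κ : ℤ)) *
      ∑ m ∈ n.divisors.filter (fun m => m ^ 2 ∣ n),
        (m : ℝ) ^ (2 * (κ - 1)) * ‖a (n / m ^ 2)‖ ^ 2)
    (C : ℝ) (hC : 0 < C)
    (Δ : ℝ → ℝ) (hΔ : ∀ x : ℝ, Δ x = (∑ n ∈ Finset.Icc 1 ⌊x⌋₊, c n) - C * x)
    (hRS : Δ =O[atTop] fun x : ℝ => x ^ ((3 : ℝ) / 5)) :
    ∃ D : ℝ, 0 < D ∧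
      (fun x : ℝ => (∑ n ∈ Finset.Icc 1 ⌊x⌋₊, ‖a n‖ ^ 2) - D * x ^ (κ : ℝ))
        =O[atTop] fun x : ℝ => x ^ ((κ : ℝ) - 2 / 5) := by
  obtain ⟨r, rfl⟩ : ∃ r, κ = r + 1 := ⟨κ - 1, by omega⟩
  have hB : ∀ N, 1 ≤ N → ∑ n ∈ Icc 1 N, ‖a n‖ ^ 2 = ∑ d ∈ Icc 1 N.sqrt,
      (μ d : ℝ) * (d : ℝ) ^ (2 * r) * ∑ k ∈ Icc 1 (N / d ^ 2), (k : ℝ) ^ r * c k := by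
    refine fun N hN => sum_Icc_eq_sum_moebius_mul_sum_pow_mul (b := fun n => ‖a n‖ ^ 2) r
      (fun k hk => ?_) hN
    rw [hc k hk, ← mul_assoc, ← zpow_natCast, ← zpow_add₀ (by positivity), Nat.add_sub_cancel]
    simp
  obtain ⟨A, hA, hΔA⟩ := exists_abs_le_rpow_of_isBigO hRS
  have hcA : ∀ n, 1 ≤ n → |∑ k ∈ Icc 1 n, c k - C * n| ≤ A * (n : ℝ) ^ ((3 : ℝ) / 5) := by
    simpa only [hΔ, Nat.floor_natCast] using hΔA
  have hTasymp : ∀ y : ℝ, 1 ≤ y →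
      |∑ k ∈ Icc 1 ⌊y⌋₊, (k : ℝ) ^ r * c k - C / (r + 1) * y ^ (r + 1)|
      ≤ (2 * A + 2 * C) * y ^ r * y ^ ((3 : ℝ) / 5) := fun y hy =>
    abs_sum_Icc_floor_pow_mul_sub_le r (by norm_num) hA.le hC.le hcA hy
  refine ⟨C / (r + 1) * ∑' d : ℕ, (μ d : ℝ) / (d : ℝ) ^ 2,
    mul_pos (by positivity) tsum_moebius_div_sq_pos, isBigO_iff.mpr
      ⟨(2 * A + 2 * C) * ∑' d : ℕ, 1 / (d : ℝ) ^ (2 * (3 / 5 : ℝ)) + 2 * |C / (r + 1)|, ?_⟩⟩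
  filter_upwards [eventually_ge_atTop 1] with x hx
  have hx0 : 0 < x := zero_lt_one.trans_le hx
  have hexp : x ^ ((((r + 1 : ℕ) : ℝ)) - 2 / 5) = x ^ r * x ^ ((3 : ℝ) / 5) := by
    rw [← rpow_natCast, ← rpow_add hx0]; push_cast; ring_nf
  rw [norm_of_nonneg (rpow_nonneg hx0.le _), hexp, rpow_natCast, Real.norm_eq_abs,
    hB _ (Nat.le_floor (by exact_mod_cast hx)), ← mul_assoc]
  exact abs_sum_moebius_mul_floor_div_sub_le (T := fun M => ∑ k ∈ Icc 1 M, (k : ℝ) ^ r * c k) r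
    (by norm_num) (by positivity) hTasymp hx

theorem stmt_13
    (κ : ℕ) (hκeven : Even κ) (hκ12 : 12 ≤ κ)
    (f : CuspForm ((⊤ : Subgroup (Matrix.SpecialLinearGroup (Fin 2) ℤ)) : Subgroup (GL (Fin 2) ℝ)) (κ : ℤ)) (hf : f ≠ 0)
    (a : ℕ → ℂ)
    (hfour : ∀ z : UpperHalfPlane, f z =
      ∑' n : ℕ, a (n + 1) * Complex.exp (2 * Real.pi * Complex.I * ((n : ℂ) + 1) * (z : ℂ)))
    (ha1 : a 1 = 1)
    (hmult : ∀ m n : ℕ, Nat.Coprime m n → a (m * n) = a m * a n)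
    (hhecke : ∀ p : ℕ, p.Prime → ∀ j : ℕ, 1 ≤ j →
      a (p ^ (j + 1)) = a p * a (p ^ j) - (p : ℂ) ^ (κ - 1) * a (p ^ (j - 1)))
    (c : ℕ → ℝ)
    (hc : ∀ n : ℕ, 1 ≤ n → c n = (n : ℝ) ^ ((1 : ℤ) - (κ : ℤ)) *
      ∑ m ∈ n.divisors.filter (fun m => m ^ 2 ∣ n),
        (m : ℝ) ^ (2 * (κ - 1)) * ‖a (n / m ^ 2)‖ ^ 2)
    (C : ℝ) (hC : 0 < C)
    (Δ : ℝ → ℝ) (hΔ : ∀ x : ℝ, Δ x = (∑ n ∈ Finset.Icc 1 ⌊x⌋₊, c n) - C * x)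
    (hRS : Δ =O[atTop] fun x : ℝ => x ^ ((3 : ℝ) / 5)) :
    ∃ D : ℝ, 0 < D ∧
      (fun x : ℝ => (∑ n ∈ Finset.Icc 1 ⌊x⌋₊, ‖a n‖ ^ 2) - D * x ^ (κ : ℝ))
        =O[atTop] fun x : ℝ => x ^ ((κ : ℝ) - 2 / 5) :=
  stmt_13_general κ hκ12 a c hc C hC Δ hΔ hRS
end
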